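/- arXiv:2303.10662 — 11 statements merged into one kernel-verified Lean document; each statement's English description precedes it below -/
import Mathlib

section
/- Let μ₁, μ₂ be positive real numbers and let ν₁, ν₂, t₂ be nonzero real numbers. Then there exists a real number w satisfying both |w| > 2√μ₁ and |ν₂|·|2w − ν₁t₂| > 4√μ₂·|2t₂w + ν₁| if and only if 16√(μ₁μ₂) − |ν₁ν₂| < (4|ν₂|√μ₁ + 4|ν₁|√μ₂)/|t₂|. -/
/-- From squared comparison to abs comparison. -/
lemma absGtAux (c B X Y : ℝ) (hc : 0 < c) (hB : 0 < B)
    (h : (B * Y) ^ 2 < (c * X) ^ 2) : B * |Y| < c * |X| := by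
  have h2 : |B * Y| < |c * X| := sq_lt_sq.mp h
  rwa [abs_mul, abs_mul, abs_of_pos hc, abs_of_pos hB] at h2

lemma absGtAux' (c B X Y : ℝ) (hc : 0 < c) (hB : 0 < B)
    (h : B * |Y| < c * |X|) : (B * Y) ^ 2 < (c * X) ^ 2 := by
  apply sq_lt_sq.mpr
  rwa [abs_mul, abs_mul, abs_of_pos hc, abs_of_pos hB]

/-- Forward direction of the key criterion, with all parameters positive. -/
lemma keyFwd (A B c n T w : ℝ) (hA : 0 < A) (hB : 0 < B) (hc : 0 < c)
    (hn : 0 < n) (hT : 0 < T) (hw : A < |w|)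
    (h2 : B * |2 * T * w + n| < c * |2 * w - n * T|) :
    2 * A * (B * T - c) < n * (B + c * T) := by
  have hsq : (B * (2 * T * w + n)) ^ 2 < (c * (2 * w - n * T)) ^ 2 :=
    absGtAux' c B _ _ hc hB h2
  by_contra hcon
  push_neg at hcon
  have hD : 0 < B * T - c := by
    by_contra hx
    push_neg at hx
    nlinarith [mul_nonneg hA.le (neg_nonneg.mpr hx),
      mul_pos hn (show (0:ℝ) < B + c * T by positivity)]
  rcases lt_abs.mp hw with h | h
  · -- w > A
    have hF1 : 0 < 2 * w * (B * T - c) + n * (B + c * T) := by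
      nlinarith [mul_pos (sub_pos.mpr h) hD,
        mul_pos hn (show (0:ℝ) < B + c * T by positivity)]
    have hF2 : 0 < 2 * w * (B * T + c) + n * (B - c * T) := by
      nlinarith [mul_pos (sub_pos.mpr h) (show (0:ℝ) < B * T + c by positivity),
        mul_pos hA hc, mul_pos hn hB]
    nlinarith [mul_pos hF1 hF2]
  · -- w < -A
    have hwA : 0 < -w - A := by linarith
    have hF1 : 2 * w * (B * T - c) + n * (B + c * T) < 0 := by
      nlinarith [mul_pos hwA hD]
    have hF2 : 2 * w * (B * T + c) + n * (B - c * T) < 0 := by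
      nlinarith [mul_pos hwA (show (0:ℝ) < B * T + c by positivity),
        mul_pos hA hc, mul_pos (mul_pos hn hc) hT]
    nlinarith [mul_pos_of_neg_of_neg hF1 hF2]

/-- Backward direction of the key criterion, with all parameters positive. -/
lemma keyBwd (A B c n T : ℝ) (hA : 0 < A) (hB : 0 < B) (hc : 0 < c)
    (hn : 0 < n) (hT : 0 < T) (h : 2 * A * (B * T - c) < n * (B + c * T)) :
    ∃ w : ℝ, A < |w| ∧ B * |2 * T * w + n| < c * |2 * w - n * T| := by
  rcases le_or_gt (B * T) c with hcase | hcase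
  · -- unbounded region: take w = -K very negative
    have hnT : 0 < n / T := div_pos hn hT
    have hK : 0 < A + n + n / T := by positivity
    have hKA : A < A + n + n / T := by linarith
    have hKT : (A + n + n / T) * T = A * T + n * T + n := by
      field_simp
    have hBKT : B * ((A + n + n / T) * T) = B * (A * T + n * T + n) := by
      rw [hKT]
    set K : ℝ := A + n + n / T with hKdef
    refine ⟨-K, ?_, ?_⟩
    · rwa [abs_neg, abs_of_pos hK]
    · have hX : |2 * (-K) - n * T| = 2 * K + n * T := by
        rw [show 2 * (-K) - n * T = -(2 * K + n * T) by ring, abs_neg,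
          abs_of_pos (by positivity)]
      rw [hX]
      rcases abs_cases (2 * T * (-K) + n) with ⟨he, _⟩ | ⟨he, _⟩ <;> rw [he] <;>
        nlinarith [hBKT, mul_nonneg (sub_nonneg.mpr hcase) hK.le,
          mul_pos (mul_pos hB hA) hT, mul_pos (mul_pos hB hn) hT,
          mul_pos hB hn, mul_pos hc hK, mul_pos (mul_pos hc hn) hT]
  · -- bounded region: take w slightly inside the endpoint -R
    have hD : 0 < B * T - c := by linarith
    have hRe : n * (B + c * T) / (2 * (B * T - c)) * (2 * (B * T - c)) =
        n * (B + c * T) := div_mul_cancel₀ _ (by positivity)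
    have hAR : A < n * (B + c * T) / (2 * (B * T - c)) := by
      rw [lt_div_iff₀ (by positivity)]
      linarith
    set R : ℝ := n * (B + c * T) / (2 * (B * T - c)) with hRdef
    have hR : 0 < R := lt_trans hA hAR
    set ε : ℝ := min ((R - A) / 2) (c * (2 * R + n * T) / (2 * (B * T + c)))
      with hεdef
    have hε : 0 < ε := lt_min (by linarith) (by positivity)
    have hε1 : ε ≤ (R - A) / 2 := min_le_left _ _
    have hε2 : ε * (2 * (B * T + c)) ≤ c * (2 * R + n * T) := by
      rw [← le_div_iff₀ (by positivity)]
      exact min_le_right _ _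
    refine ⟨-R + ε, ?_, ?_⟩
    · rw [show -R + ε = -(R - ε) by ring, abs_neg, abs_of_pos (by linarith)]
      linarith
    · have hF1 : 0 < 2 * (-R + ε) * (B * T - c) + n * (B + c * T) := by
        nlinarith [mul_pos hε hD, hRe]
      have hF2 : 2 * (-R + ε) * (B * T + c) + n * (B - c * T) < 0 := by
        nlinarith [hε2, mul_pos hc hR, mul_pos (mul_pos hn hc) hT, hRe]
      apply absGtAux c B _ _ hc hB
      nlinarith [mul_neg_of_pos_of_neg hF1 hF2]

/-- Sign flip in the first parameter. -/
lemma flip1 (A B c p q : ℝ)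
    (h : ∃ w : ℝ, A < |w| ∧ B * |2 * q * w + p| < c * |2 * w - p * q|) :
    ∃ w : ℝ, A < |w| ∧ B * |2 * q * w + -p| < c * |2 * w - -p * q| := by
  obtain ⟨w, hw, h2⟩ := h
  refine ⟨-w, by rwa [abs_neg], ?_⟩
  rw [show 2 * q * -w + -p = -(2 * q * w + p) by ring, abs_neg,
    show 2 * -w - -p * q = -(2 * w - p * q) by ring, abs_neg]
  exact h2

/-- Sign flip in the second parameter. -/
lemma flip2 (A B c p q : ℝ)
    (h : ∃ w : ℝ, A < |w| ∧ B * |2 * q * w + p| < c * |2 * w - p * q|) :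
    ∃ w : ℝ, A < |w| ∧ B * |2 * -q * w + p| < c * |2 * w - p * -q| := by
  obtain ⟨w, hw, h2⟩ := h
  refine ⟨-w, by rwa [abs_neg], ?_⟩
  rw [show 2 * -q * -w + p = 2 * q * w + p by ring,
    show 2 * -w - p * -q = -(2 * w - p * q) by ring, abs_neg]
  exact h2

/-- Bridge: the existence problem only depends on `|ν₁|`, `|t₂|`. -/
lemma bridge (A B c p q p' q' : ℝ) (hp : p' = |p|) (hq : q' = |q|) :
    (∃ w : ℝ, A < |w| ∧ B * |2 * q * w + p| < c * |2 * w - p * q|) ↔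
    (∃ w : ℝ, A < |w| ∧ B * |2 * q' * w + p'| < c * |2 * w - p' * q'|) := by
  subst hp
  subst hq
  rcases abs_choice p with h1 | h1 <;> rcases abs_choice q with h2 | h2 <;>
    rw [h1, h2]
  · constructor
    · exact flip2 A B c p q
    · intro h
      have := flip2 A B c p (-q) h
      simpa using this
  · constructor
    · exact flip1 A B c p q
    · intro h
      have := flip1 A B c (-p) q h
      simpa using this
  · constructor
    · intro h
      exact flip2 A B c (-p) q (flip1 A B c p q h)
    · intro h
      have h1' := flip1 A B c (-p) (-q) h
      have h2' := flip2 A B c p (-q) (by simpa using h1')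
      simpa using h2'

/-- Global existence criterion (Appendix A, Case 4): the system of inequalities
`|w| > 2√μ₁` and `|ν₂|·|2w − ν₁t₂| > 4√μ₂·|2t₂w + ν₁|` has a real solution iff
`16√(μ₁μ₂) − |ν₁ν₂| < (4|ν₂|√μ₁ + 4|ν₁|√μ₂)/|t₂|`. -/
theorem stmt_0 (μ₁ μ₂ ν₁ ν₂ t₂ : ℝ) (hμ₁ : 0 < μ₁) (hμ₂ : 0 < μ₂)
    (hν₁ : ν₁ ≠ 0) (hν₂ : ν₂ ≠ 0) (ht₂ : t₂ ≠ 0) :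
    (∃ w : ℝ, |w| > 2 * Real.sqrt μ₁ ∧
      |ν₂| * |2 * w - ν₁ * t₂| > 4 * Real.sqrt μ₂ * |2 * t₂ * w + ν₁|) ↔
    16 * Real.sqrt (μ₁ * μ₂) - |ν₁ * ν₂| <
      (4 * |ν₂| * Real.sqrt μ₁ + 4 * |ν₁| * Real.sqrt μ₂) / |t₂| := by
  have hA : 0 < 2 * Real.sqrt μ₁ := by positivity
  have hB : 0 < 4 * Real.sqrt μ₂ := by positivity
  have hc : 0 < |ν₂| := abs_pos.mpr hν₂
  have hn : 0 < |ν₁| := abs_pos.mpr hν₁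
  have hT : 0 < |t₂| := abs_pos.mpr ht₂
  have hsqrtmul : Real.sqrt (μ₁ * μ₂) = Real.sqrt μ₁ * Real.sqrt μ₂ :=
    Real.sqrt_mul hμ₁.le _
  have habs : |ν₁ * ν₂| = |ν₁| * |ν₂| := abs_mul _ _
  have hiff : (∃ w : ℝ, 2 * Real.sqrt μ₁ < |w| ∧
      4 * Real.sqrt μ₂ * |2 * t₂ * w + ν₁| < |ν₂| * |2 * w - ν₁ * t₂|) ↔
      2 * (2 * Real.sqrt μ₁) * (4 * Real.sqrt μ₂ * |t₂| - |ν₂|) <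
        |ν₁| * (4 * Real.sqrt μ₂ + |ν₂| * |t₂|) := by
    rw [bridge (2 * Real.sqrt μ₁) (4 * Real.sqrt μ₂) |ν₂| ν₁ t₂ |ν₁| |t₂| rfl rfl]
    constructor
    · rintro ⟨w, hw, h2⟩
      exact keyFwd _ _ _ _ _ w hA hB hc hn hT hw h2
    · intro h
      exact keyBwd _ _ _ _ _ hA hB hc hn hT h
  rw [lt_div_iff₀ hT, hsqrtmul, habs]
  constructor
  · rintro ⟨w, hw, h2⟩
    have := hiff.mp ⟨w, hw, h2⟩
    nlinarith [this]
  · intro h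
    obtain ⟨w, hw, h2⟩ := hiff.mpr (by nlinarith)
    exact ⟨w, hw, h2⟩
end

section
/- Let λ, μ be nonzero real numbers and ν a real number. The set S = {(x₁, x₂) ∈ ℝ² : x₁ ≠ 0, x₂ ≠ 0, (x₂ + λ/x₂)·(x₁ + μ/x₁) = ν} is infinite if and only if λ < 0, or μ < 0, or (λ > 0 and μ > 0 and ν² > 16·λ·μ). -/
/-- Solve `x + c/x = t` when the discriminant `t^2 - 4c` is nonnegative. -/
lemma exists_sol (c t : ℝ) (hc : c ≠ 0) (h : 4*c ≤ t^2) :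
    ∃ x : ℝ, x ≠ 0 ∧ x + c/x = t := by
  have hnn : 0 ≤ t^2 - 4*c := by linarith
  set d := Real.sqrt (t^2 - 4*c) with hdd
  have hd2 : d^2 = t^2 - 4*c := Real.sq_sqrt hnn
  have hx0 : (t+d)/2 ≠ 0 := by
    intro h0
    have h1 : t + d = 0 := by linarith
    exact hc (by linear_combination ((t-d)/4) * h1 + (1/4) * hd2)
  have h1 : t + d ≠ 0 := by
    intro h'
    exact hx0 (by rw [h']; norm_num)
  refine ⟨(t+d)/2, hx0, ?_⟩
  rw [div_add_div _ _ (by norm_num : (2:ℝ) ≠ 0) (by simpa using hx0), div_eq_iff]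
  · ring_nf
    nlinarith [hd2]
  · intro h'
    apply h1
    nlinarith [h']

set_option maxHeartbeats 1600000 in
/-- Local existence: the configuration-space equation of an elliptic orthodiagonal
spherical quadrilateral has an infinite set of real solutions iff the stated sign
conditions on the involution factors hold. -/
theorem stmt_1 (lam μ ν : ℝ) (hlam : lam ≠ 0) (hμ : μ ≠ 0) :
    {p : ℝ × ℝ | p.1 ≠ 0 ∧ p.2 ≠ 0 ∧
      (p.2 + lam / p.2) * (p.1 + μ / p.1) = ν}.Infinite ↔
    lam < 0 ∨ μ < 0 ∨ (0 < lam ∧ 0 < μ ∧ ν ^ 2 > 16 * lam * μ) := by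
  constructor
  · -- forward direction, by contradiction
    intro hinf
    by_contra hcon
    push_neg at hcon
    obtain ⟨h1, h2, h3⟩ := hcon
    have hl : 0 < lam := lt_of_le_of_ne h1 (Ne.symm hlam)
    have hm : 0 < μ := lt_of_le_of_ne h2 (Ne.symm hμ)
    have hν2 : ν^2 ≤ 16*lam*μ := h3 hl hm
    set a := Real.sqrt μ with haa
    set b := Real.sqrt lam with hbb
    have ha : a^2 = μ := Real.sq_sqrt hm.le
    have hb : b^2 = lam := Real.sq_sqrt hl.le
    have hfin : ({((a:ℝ),(b:ℝ)), (a,-b), (-a,b), (-a,-b)} : Set (ℝ×ℝ)).Finite :=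
      (((Set.finite_singleton _).insert _).insert _).insert _
    apply hinf
    apply hfin.subset
    rintro ⟨x, y⟩ ⟨hx0, hy0, hE⟩
    simp only at hx0 hy0 hE
    have hE' : (y^2 + lam) * (x^2 + μ) = ν * (x*y) := by
      field_simp at hE
      linear_combination hE
    have hx2 : 0 < x^2 := by positivity
    have hy2 : 0 < y^2 := by positivity
    have hineq : ν^2 * (x*y)^2 ≤ 16*lam*μ*(x*y)^2 :=
      mul_le_mul_of_nonneg_right hν2 (sq_nonneg _)
    have hE2 : ((y^2+lam)*(x^2+μ))^2 = ν^2*(x*y)^2 := by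
      rw [hE']; ring
    have key : 4*lam*y^2*(x^2-μ)^2 + 4*μ*x^2*(y^2-lam)^2 + (x^2-μ)^2*(y^2-lam)^2 ≤ 0 := by
      nlinarith [hE2, hineq]
    have hA : (x^2-μ)^2 ≤ 0 := by
      nlinarith [key, mul_nonneg (by positivity : (0:ℝ) ≤ 4*μ*x^2) (sq_nonneg (y^2-lam)),
        mul_nonneg (sq_nonneg (x^2-μ)) (sq_nonneg (y^2-lam)),
        (by positivity : (0:ℝ) < 4*lam*y^2)]
    have hB : (y^2-lam)^2 ≤ 0 := by
      nlinarith [key, mul_nonneg (by positivity : (0:ℝ) ≤ 4*lam*y^2) (sq_nonneg (x^2-μ)),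
        mul_nonneg (sq_nonneg (x^2-μ)) (sq_nonneg (y^2-lam)),
        (by positivity : (0:ℝ) < 4*μ*x^2)]
    have hxμ : x^2 = μ := by
      have h0 : x^2 - μ = 0 :=
        (pow_eq_zero_iff two_ne_zero).mp (le_antisymm hA (sq_nonneg _))
      linarith
    have hylam : y^2 = lam := by
      have h0 : y^2 - lam = 0 :=
        (pow_eq_zero_iff two_ne_zero).mp (le_antisymm hB (sq_nonneg _))
      linarith
    have hxa : x = a ∨ x = -a := by
      have : (x - a) * (x + a) = 0 := by linear_combination hxμ - ha
      rcases mul_eq_zero.mp this with h | h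
      · left; linarith
      · right; linarith
    have hyb : y = b ∨ y = -b := by
      have : (y - b) * (y + b) = 0 := by linear_combination hylam - hb
      rcases mul_eq_zero.mp this with h | h
      · left; linarith
      · right; linarith
    simp only [Set.mem_insert_iff, Set.mem_singleton_iff, Prod.mk.injEq]
    rcases hxa with h | h <;> rcases hyb with h' | h' <;> simp [h, h']
  · rintro (h | h | ⟨hl, hm, hν⟩)
    · -- lam < 0 : fix x₁ = n+1+|μ|, solve for x₂
      have hex : ∀ n : ℕ, ∃ p : ℝ × ℝ, (p ∈ {p : ℝ × ℝ | p.1 ≠ 0 ∧ p.2 ≠ 0 ∧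
          (p.2 + lam / p.2) * (p.1 + μ / p.1) = ν}) ∧ p.1 = (n:ℝ)+1+|μ| := by
        intro n
        obtain ⟨x, hxdef⟩ : ∃ x : ℝ, x = (n:ℝ)+1+|μ| := ⟨_, rfl⟩
        have hn0 : (0:ℝ) ≤ n := Nat.cast_nonneg n
        have habs : |μ| ≥ 0 := abs_nonneg μ
        have hx1 : (1:ℝ)+|μ| ≤ x := by rw [hxdef]; linarith
        have hxpos : 0 < x := by linarith
        have hx0 : x ≠ 0 := hxpos.ne'
        have hnum : 0 < x^2 + μ := by nlinarith [neg_abs_le μ]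
        have hden : x + μ/x ≠ 0 := by
          have hrw : x + μ/x = (x^2 + μ)/x := by field_simp
          rw [hrw]
          positivity
        obtain ⟨y, hy0, hy⟩ := exists_sol lam (ν/(x + μ/x)) hlam
          (by nlinarith [sq_nonneg (ν/(x + μ/x))])
        exact ⟨(x, y), ⟨hx0, hy0, by rw [hy]; exact div_mul_cancel₀ ν hden⟩, hxdef.symm ▸ rfl⟩
      choose f hfS hf1 using hex
      apply Set.infinite_of_injective_forall_mem (f := f) _ hfS
      intro n m hnm
      have := congrArg Prod.fst hnm
      rw [hf1 n, hf1 m] at this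
      have : (n:ℝ) = m := by linarith
      exact_mod_cast this
    · -- μ < 0 : fix x₂ = n+1+|lam|, solve for x₁
      have hex : ∀ n : ℕ, ∃ p : ℝ × ℝ, (p ∈ {p : ℝ × ℝ | p.1 ≠ 0 ∧ p.2 ≠ 0 ∧
          (p.2 + lam / p.2) * (p.1 + μ / p.1) = ν}) ∧ p.2 = (n:ℝ)+1+|lam| := by
        intro n
        obtain ⟨y, hydef⟩ : ∃ y : ℝ, y = (n:ℝ)+1+|lam| := ⟨_, rfl⟩
        have hn0 : (0:ℝ) ≤ n := Nat.cast_nonneg n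
        have habs : |lam| ≥ 0 := abs_nonneg lam
        have hy1 : (1:ℝ)+|lam| ≤ y := by rw [hydef]; linarith
        have hypos : 0 < y := by linarith
        have hy0 : y ≠ 0 := hypos.ne'
        have hnum : 0 < y^2 + lam := by nlinarith [neg_abs_le lam]
        have hden : y + lam/y ≠ 0 := by
          have hrw : y + lam/y = (y^2 + lam)/y := by field_simp
          rw [hrw]
          positivity
        obtain ⟨x, hx0, hx⟩ := exists_sol μ (ν/(y + lam/y)) hμ
          (by nlinarith [sq_nonneg (ν/(y + lam/y))])
        refine ⟨(x, y), ⟨hx0, hy0, ?_⟩, hydef.symm ▸ rfl⟩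
        simp only
        rw [hx, mul_comm]
        exact div_mul_cancel₀ ν hden
      choose f hfS hf2 using hex
      apply Set.infinite_of_injective_forall_mem (f := f) _ hfS
      intro n m hnm
      have := congrArg Prod.snd hnm
      rw [hf2 n, hf2 m] at this
      have : (n:ℝ) = m := by linarith
      exact_mod_cast this
    · -- lam > 0, μ > 0, ν² > 16 lam μ
      obtain ⟨a, haa⟩ : ∃ a : ℝ, a = Real.sqrt μ := ⟨_, rfl⟩
      obtain ⟨b, hbb⟩ : ∃ b : ℝ, b = Real.sqrt lam := ⟨_, rfl⟩
      have ha : a^2 = μ := by rw [haa]; exact Real.sq_sqrt hm.le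
      have hb : b^2 = lam := by rw [hbb]; exact Real.sq_sqrt hl.le
      have ha0 : 0 < a := by rw [haa]; exact Real.sqrt_pos.mpr hm
      have hb0 : 0 < b := by rw [hbb]; exact Real.sqrt_pos.mpr hl
      have habs : 4*a*b < |ν| := by
        nlinarith [abs_nonneg ν, sq_abs ν, mul_pos ha0 hb0]
      obtain ⟨w, hwdef⟩ : ∃ w : ℝ, w = |ν|/(2*b) - 2*a := ⟨_, rfl⟩
      have hw : 0 < w := by
        rw [hwdef, sub_pos, lt_div_iff₀ (by linarith : (0:ℝ) < 2*b)]
        linarith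
      have hex : ∀ n : ℕ, ∃ p : ℝ × ℝ, (p ∈ {p : ℝ × ℝ | p.1 ≠ 0 ∧ p.2 ≠ 0 ∧
          (p.2 + lam / p.2) * (p.1 + μ / p.1) = ν}) ∧
          p.1 + μ/p.1 = 2*a + w/((n:ℝ)+1) := by
        intro n
        have hn1 : (0:ℝ) < (n:ℝ)+1 := by positivity
        obtain ⟨s, hsdef⟩ : ∃ s : ℝ, s = 2*a + w/((n:ℝ)+1) := ⟨_, rfl⟩
        have hwn : 0 < w/((n:ℝ)+1) := by positivity
        have hs0 : 0 < s := by rw [hsdef]; positivity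
        have hsle : s ≤ |ν|/(2*b) := by
          rw [hsdef, hwdef]
          have h' : w/((n:ℝ)+1) ≤ w := by
            rw [div_le_iff₀ hn1]; nlinarith
          rw [hwdef] at h'
          linarith
        have hbs : 2*b*s ≤ |ν| := by
          rw [le_div_iff₀ (by linarith : (0:ℝ) < 2*b)] at hsle
          linarith
        have hs2a : 2*a ≤ s := by rw [hsdef]; linarith
        have hs2 : 4*μ ≤ s^2 := by
          have h' := mul_nonneg (by linarith : (0:ℝ) ≤ s - 2*a) (by linarith : (0:ℝ) ≤ s + 2*a)
          nlinarith [ha]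
        obtain ⟨x, hx0, hx⟩ := exists_sol μ s hμ hs2
        have ht : 4*lam ≤ (ν/s)^2 := by
          have hplus : 0 ≤ |ν| + 2*b*s := by positivity
          have h2 := mul_nonneg (by linarith : (0:ℝ) ≤ |ν| - 2*b*s) hplus
          rw [div_pow, le_div_iff₀ (by positivity)]
          nlinarith [h2, sq_abs ν, hb]
        obtain ⟨y, hy0, hy⟩ := exists_sol lam (ν/s) hlam ht
        refine ⟨(x, y), ⟨hx0, hy0, ?_⟩, by rw [hx, hsdef]⟩
        simp only
        rw [hy, hx]
        exact div_mul_cancel₀ ν hs0.ne'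
      choose f hfS hfs using hex
      apply Set.infinite_of_injective_forall_mem (f := f) _ hfS
      intro n m hnm
      have h1 : (f n).1 + μ/(f n).1 = (f m).1 + μ/(f m).1 := by rw [hnm]
      rw [hfs n, hfs m] at h1
      have h2 : w/((n:ℝ)+1) = w/((m:ℝ)+1) := by linarith
      have hn1 : ((n:ℝ)+1) ≠ 0 := by positivity
      have hm1 : ((m:ℝ)+1) ≠ 0 := by positivity
      field_simp at h2
      exact_mod_cast (by linarith : (n:ℝ) = m)
end

section
/- Let α, β, γ, δ ∈ (0, π) satisfy cos α · cos γ = cos β · cos δ, suppose that α + ε₁β + ε₂γ + ε₃δ is not an integer multiple of 2π for any signs ε₁, ε₂, ε₃ ∈ {−1, 1}, and assume α ≠ π/2, γ ≠ π/2, δ ≠ π/2. Set λ = (tan δ + tan α)/(tan δ − tan α), μ = (tan δ + tan γ)/(tan δ − tan γ), ν = (λ − 1)(μ − 1)/cos δ, and set c₂₂ = sin((α+β+γ−δ)/2)·sin((α−β+γ−δ)/2), c₂₀ = sin((α−β−γ−δ)/2)·sin((α+β−γ−δ)/2), c₀₂ = sin((α+β−γ+δ)/2)·sin((α−β−γ+δ)/2),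 c₁₁ = −sin α · sin γ, c₀₀ = sin((α−β+γ+δ)/2)·sin((α+β+γ+δ)/2). Then for all nonzero real numbers x₁, x₂: c₂₂·x₂²x₁² + c₂₀·x₂² + c₀₂·x₁² + 2c₁₁·x₂x₁ + c₀₀ = 0 if and only if (x₂ + λ/x₂)·(x₁ + μ/x₁) = ν. -/
open Real

private lemma half_prod (x y : ℝ) :
    2 * (sin ((x + y) / 2) * sin ((x - y) / 2)) = cos y - cos x := by
  rw [Real.cos_sub_cos, show (y + x) / 2 = (x + y) / 2 by ring,
    show (y - x) / 2 = -((x - y) / 2) by ring, Real.sin_neg]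
  ring

private lemma keyL3 (a c d : ℝ) :
    (cos a * cos c - cos d * cos (a - c - d)) * sin (d - c)
      = (cos a * cos c - cos d * cos (a + c - d)) * sin (d + c) := by
  simp only [Real.cos_sub, Real.cos_add, Real.sin_sub, Real.sin_add]
  linear_combination (2 * cos a * sin c * cos c * cos d) * Real.sin_sq_add_cos_sq d

private lemma keyL4 (a c d : ℝ) :
    (cos a * cos c - cos d * cos (a - c + d)) * sin (d - a)
      = (cos a * cos c - cos d * cos (a + c - d)) * sin (d + a) := by
  simp only [Real.cos_sub, Real.cos_add, Real.sin_sub, Real.sin_add]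
  linear_combination (2 * sin a * cos a * cos c * cos d) * Real.sin_sq_add_cos_sq d

private lemma keyL5 (a c d : ℝ) :
    (cos a * cos c - cos d * cos (a + c + d)) * (sin (d - a) * sin (d - c))
      = (cos a * cos c - cos d * cos (a + c - d)) * (sin (d + a) * sin (d + c)) := by
  simp only [Real.cos_sub, Real.cos_add, Real.sin_sub, Real.sin_add]
  linear_combination (2 * cos a ^ 2 * sin c * cos c * sin d * cos d
    + 2 * sin a * cos a * cos c ^ 2 * sin d * cos d) * Real.sin_sq_add_cos_sq d

private lemma keyL6 (a c d : ℝ) :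
    sin (d - a) * sin (d - c) = cos a * cos c - cos d * cos (a + c - d) := by
  simp only [Real.cos_sub, Real.cos_add, Real.sin_sub, Real.sin_add]
  linear_combination (cos a * cos c) * Real.sin_sq_add_cos_sq d

/-- For an elliptic orthodiagonal spherical quadrilateral (generic case), Bricard's
biquadratic equation is equivalent, away from `x₁ x₂ = 0`, to the factored equation
`(x₂ + λ/x₂)(x₁ + μ/x₁) = ν`. -/
theorem stmt_2 (α β γ δ : ℝ)
    (hα : α ∈ Set.Ioo 0 π) (hβ : β ∈ Set.Ioo 0 π) (hγ : γ ∈ Set.Ioo 0 π)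
    (hδ : δ ∈ Set.Ioo 0 π)
    (orth : cos α * cos γ = cos β * cos δ)
    (ell : ∀ ε₁ ε₂ ε₃ : ℝ, (ε₁ = 1 ∨ ε₁ = -1) → (ε₂ = 1 ∨ ε₂ = -1) →
      (ε₃ = 1 ∨ ε₃ = -1) → ∀ k : ℤ, α + ε₁ * β + ε₂ * γ + ε₃ * δ ≠ 2 * π * k)
    (hα2 : α ≠ π / 2) (hγ2 : γ ≠ π / 2) (hδ2 : δ ≠ π / 2)
    (lam μ ν c22 c20 c02 c11 c00 : ℝ)
    (hlam : lam = (tan δ + tan α) / (tan δ - tan α))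
    (hμ : μ = (tan δ + tan γ) / (tan δ - tan γ))
    (hν : ν = (lam - 1) * (μ - 1) / cos δ)
    (hc22 : c22 = sin ((α + β + γ - δ) / 2) * sin ((α - β + γ - δ) / 2))
    (hc20 : c20 = sin ((α - β - γ - δ) / 2) * sin ((α + β - γ - δ) / 2))
    (hc02 : c02 = sin ((α + β - γ + δ) / 2) * sin ((α - β - γ + δ) / 2))
    (hc11 : c11 = -(sin α * sin γ))
    (hc00 : c00 = sin ((α - β + γ + δ) / 2) * sin ((α + β + γ + δ) / 2)) :
    ∀ x₁ x₂ : ℝ, x₁ ≠ 0 → x₂ ≠ 0 →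
      (c22 * x₂ ^ 2 * x₁ ^ 2 + c20 * x₂ ^ 2 + c02 * x₁ ^ 2 + 2 * c11 * (x₂ * x₁) + c00 = 0 ↔
        (x₂ + lam / x₂) * (x₁ + μ / x₁) = ν) := by
  obtain ⟨hα0, hαπ⟩ := hα
  obtain ⟨hβ0, hβπ⟩ := hβ
  obtain ⟨hγ0, hγπ⟩ := hγ
  obtain ⟨hδ0, hδπ⟩ := hδ
  have hπ2 : (π/2 : ℝ) ∈ Set.Icc (0:ℝ) π := ⟨by positivity, by linarith [pi_pos]⟩
  have hca : cos α ≠ 0 := fun h => hα2 <|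
    Real.injOn_cos ⟨hα0.le, hαπ.le⟩ hπ2 (by rw [h, Real.cos_pi_div_two])
  have hcγ : cos γ ≠ 0 := fun h => hγ2 <|
    Real.injOn_cos ⟨hγ0.le, hγπ.le⟩ hπ2 (by rw [h, Real.cos_pi_div_two])
  have hcd : cos δ ≠ 0 := fun h => hδ2 <|
    Real.injOn_cos ⟨hδ0.le, hδπ.le⟩ hπ2 (by rw [h, Real.cos_pi_div_two])
  -- nonvanishing of sin (δ - α)
  have hnzero : ∀ n : ℤ, -π < (n : ℝ) * π → (n : ℝ) * π < π → n = 0 := by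
    intro n h1 h2
    have hp := pi_pos
    have l1 : (-1 : ℝ) < n := by nlinarith
    have l2 : (n : ℝ) < 1 := by nlinarith
    have l1' : (-1 : ℤ) < n := by exact_mod_cast l1
    have l2' : n < 1 := by exact_mod_cast l2
    omega
  have hs1 : sin (δ - α) ≠ 0 := by
    intro h
    rw [Real.sin_eq_zero_iff] at h
    obtain ⟨n, hn⟩ := h
    have hn0 : n = 0 := hnzero n (by rw [hn]; linarith) (by rw [hn]; linarith)
    rw [hn0] at hn
    have hδα : δ = α := by push_cast at hn; linarith
    have hcb : cos γ = cos β := by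
      apply mul_left_cancel₀ hca
      rw [hδα] at orth
      linear_combination orth
    have hγβ : γ = β := Real.injOn_cos ⟨hγ0.le, hγπ.le⟩ ⟨hβ0.le, hβπ.le⟩ hcb
    exact ell (-1) 1 (-1) (Or.inr rfl) (Or.inl rfl) (Or.inr rfl) 0
      (by rw [hδα, hγβ]; push_cast; ring)
  have hs3 : sin (δ - γ) ≠ 0 := by
    intro h
    rw [Real.sin_eq_zero_iff] at h
    obtain ⟨n, hn⟩ := h
    have hn0 : n = 0 := hnzero n (by rw [hn]; linarith) (by rw [hn]; linarith)
    rw [hn0] at hn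
    have hδγ : δ = γ := by push_cast at hn; linarith
    have hcb : cos α = cos β := by
      apply mul_right_cancel₀ hcγ
      rw [hδγ] at orth
      linear_combination orth
    have hαβ : α = β := Real.injOn_cos ⟨hα0.le, hαπ.le⟩ ⟨hβ0.le, hβπ.le⟩ hcb
    exact ell (-1) 1 (-1) (Or.inr rfl) (Or.inl rfl) (Or.inr rfl) 0
      (by rw [hδγ, hαβ]; push_cast; ring)
  have hc22ne : c22 ≠ 0 := by
    rw [hc22]
    apply mul_ne_zero
    · intro h
      rw [Real.sin_eq_zero_iff] at h
      obtain ⟨n, hn⟩ := h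
      exact ell 1 1 (-1) (Or.inl rfl) (Or.inl rfl) (Or.inr rfl) n (by push_cast; linarith)
    · intro h
      rw [Real.sin_eq_zero_iff] at h
      obtain ⟨n, hn⟩ := h
      exact ell (-1) 1 (-1) (Or.inr rfl) (Or.inl rfl) (Or.inr rfl) n (by push_cast; linarith)
  -- product-to-sum forms of the coefficients
  have h22 : 2 * c22 = cos β - cos (α + γ - δ) := by
    rw [hc22, show (α + β + γ - δ) / 2 = ((α + γ - δ) + β) / 2 by ring,
      show (α - β + γ - δ) / 2 = ((α + γ - δ) - β) / 2 by ring]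
    linear_combination half_prod (α + γ - δ) β
  have h20 : 2 * c20 = cos β - cos (α - γ - δ) := by
    rw [hc20, show (α - β - γ - δ) / 2 = ((α - γ - δ) - β) / 2 by ring,
      show (α + β - γ - δ) / 2 = ((α - γ - δ) + β) / 2 by ring]
    linear_combination half_prod (α - γ - δ) β
  have h02 : 2 * c02 = cos β - cos (α - γ + δ) := by
    rw [hc02, show (α + β - γ + δ) / 2 = ((α - γ + δ) + β) / 2 by ring,
      show (α - β - γ + δ) / 2 = ((α - γ + δ) - β) / 2 by ring]
    linear_combination half_prod (α - γ + δ) β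
  have h00 : 2 * c00 = cos β - cos (α + γ + δ) := by
    rw [hc00, show (α - β + γ + δ) / 2 = ((α + γ + δ) - β) / 2 by ring,
      show (α + β + γ + δ) / 2 = ((α + γ + δ) + β) / 2 by ring]
    linear_combination half_prod (α + γ + δ) β
  -- the key identities
  have E3 : c20 * sin (δ - γ) = c22 * sin (δ + γ) := by
    apply mul_right_cancel₀ hcd
    linear_combination (sin (δ - γ) * cos δ / 2) * h20 - (sin (δ + γ) * cos δ / 2) * h22
      + (1/2) * keyL3 α γ δ + ((sin (δ + γ) - sin (δ - γ)) / 2) * orth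
  have E4 : c02 * sin (δ - α) = c22 * sin (δ + α) := by
    apply mul_right_cancel₀ hcd
    linear_combination (sin (δ - α) * cos δ / 2) * h02 - (sin (δ + α) * cos δ / 2) * h22
      + (1/2) * keyL4 α γ δ + ((sin (δ + α) - sin (δ - α)) / 2) * orth
  have E5 : c00 * (sin (δ - α) * sin (δ - γ)) = c22 * (sin (δ + α) * sin (δ + γ)) := by
    apply mul_right_cancel₀ hcd
    linear_combination (sin (δ - α) * sin (δ - γ) * cos δ / 2) * h00
      - (sin (δ + α) * sin (δ + γ) * cos δ / 2) * h22
      + (1/2) * keyL5 α γ δ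
      + ((sin (δ + α) * sin (δ + γ) - sin (δ - α) * sin (δ - γ)) / 2) * orth
  have E6 : sin (δ - α) * sin (δ - γ) = 2 * cos δ * c22 := by
    apply mul_right_cancel₀ hcd
    linear_combination cos δ * keyL6 α γ δ + cos δ * orth - cos δ ^ 2 * h22
  -- the involution factors
  have hdiffα : tan δ - tan α = sin (δ - α) / (cos δ * cos α) := by
    rw [Real.tan_eq_sin_div_cos, Real.tan_eq_sin_div_cos, div_sub_div _ _ hcd hca,
      Real.sin_sub]
  have hsumα : tan δ + tan α = sin (δ + α) / (cos δ * cos α) := by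
    rw [Real.tan_eq_sin_div_cos, Real.tan_eq_sin_div_cos, div_add_div _ _ hcd hca,
      Real.sin_add]
  have hdiffγ : tan δ - tan γ = sin (δ - γ) / (cos δ * cos γ) := by
    rw [Real.tan_eq_sin_div_cos, Real.tan_eq_sin_div_cos, div_sub_div _ _ hcd hcγ,
      Real.sin_sub]
  have hsumγ : tan δ + tan γ = sin (δ + γ) / (cos δ * cos γ) := by
    rw [Real.tan_eq_sin_div_cos, Real.tan_eq_sin_div_cos, div_add_div _ _ hcd hcγ,
      Real.sin_add]
  have htdα : tan δ - tan α ≠ 0 := by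
    rw [hdiffα]; exact div_ne_zero hs1 (mul_ne_zero hcd hca)
  have htdγ : tan δ - tan γ ≠ 0 := by
    rw [hdiffγ]; exact div_ne_zero hs3 (mul_ne_zero hcd hcγ)
  have E1 : lam * sin (δ - α) = sin (δ + α) := by
    rw [hlam, div_mul_eq_mul_div, div_eq_iff htdα, hsumα, hdiffα]
    field_simp
  have E2 : μ * sin (δ - γ) = sin (δ + γ) := by
    rw [hμ, div_mul_eq_mul_div, div_eq_iff htdγ, hsumγ, hdiffγ]
    field_simp
  -- scalar consequences
  have eμ : c20 = c22 * μ := by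
    apply mul_right_cancel₀ hs3
    linear_combination E3 - c22 * E2
  have elam : c02 = c22 * lam := by
    apply mul_right_cancel₀ hs1
    linear_combination E4 - c22 * E1
  have e00 : c00 = c22 * (lam * μ) := by
    apply mul_right_cancel₀ (mul_ne_zero hs1 hs3)
    linear_combination E5 - c22 * lam * sin (δ - α) * E2 - c22 * sin (δ + γ) * E1
  have hνc : ν * cos δ = (lam - 1) * (μ - 1) := by
    rw [hν]; exact div_mul_cancel₀ _ hcd
  have g1 : (lam - 1) * sin (δ - α) = 2 * sin α * cos δ := by
    have hid : sin (δ + α) - sin (δ - α) = 2 * sin α * cos δ := by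
      rw [Real.sin_add, Real.sin_sub]; ring
    linear_combination E1 + hid
  have g2 : (μ - 1) * sin (δ - γ) = 2 * sin γ * cos δ := by
    have hid : sin (δ + γ) - sin (δ - γ) = 2 * sin γ * cos δ := by
      rw [Real.sin_add, Real.sin_sub]; ring
    linear_combination E2 + hid
  have hν2 : ν * c22 = 2 * (sin α * sin γ) := by
    apply mul_right_cancel₀ (mul_ne_zero (mul_ne_zero two_ne_zero hcd) hcd)
    linear_combination (-(ν * cos δ)) * E6 + sin (δ - α) * sin (δ - γ) * hνc
      + (μ - 1) * sin (δ - γ) * g1 + 2 * sin α * cos δ * g2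
  have ec11 : 2 * c11 = -(c22 * ν) := by
    rw [hc11]; linear_combination hν2
  -- conclusion
  intro x₁ x₂ hx1 hx2
  have key : c22 * x₂ ^ 2 * x₁ ^ 2 + c20 * x₂ ^ 2 + c02 * x₁ ^ 2 + 2 * c11 * (x₂ * x₁) + c00
      = c22 * ((x₂ ^ 2 + lam) * (x₁ ^ 2 + μ) - ν * (x₂ * x₁)) := by
    linear_combination x₂ ^ 2 * eμ + x₁ ^ 2 * elam + (x₂ * x₁) * ec11 + e00
  have hiff2 : (x₂ + lam / x₂) * (x₁ + μ / x₁) = ν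
      ↔ (x₂ ^ 2 + lam) * (x₁ ^ 2 + μ) = ν * (x₂ * x₁) := by
    rw [show x₂ + lam / x₂ = (x₂ ^ 2 + lam) / x₂ by field_simp,
      show x₁ + μ / x₁ = (x₁ ^ 2 + μ) / x₁ by field_simp,
      div_mul_div_comm, div_eq_iff (mul_ne_zero hx2 hx1)]
  rw [key, hiff2, mul_eq_zero]
  constructor
  · rintro (h | h)
    · exact absurd h hc22ne
    · linarith [h]
  · intro h
    right
    linarith [h]
end

section
/- Let λ₁, λ₂ be nonzero real numbers and F₂ a real number. Then the identity λ₁·((1 − λ₂F₂²)·x + (λ₂ + 1)·F₂) = x·(−(λ₂ + 1)·F₂·x + λ₂ − F₂²) holds for every real number x if and only if either (F₂ = 0 and λ₁ = λ₂) or (F₂ ≠ 0 and λ₁ = λ₂ = −1). -/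
/-! Both sides are polynomials of degree at most two in `x`, so the identity is equivalent to
equality of coefficients: `(λ₂ + 1) F₂ = 0` from `x²` and `λ₁ (1 - λ₂ F₂²) = λ₂ - F₂²` from `x`,
the constant term then vanishing automatically. -/

theorem quadratic_eq_zero_forall_iff {K : Type*} [Field K] [NeZero (2 : K)] (a b c : K) :
    (∀ x : K, a * x ^ 2 + b * x + c = 0) ↔ a = 0 ∧ b = 0 ∧ c = 0 := by
  refine ⟨fun h => ?_, fun ⟨ha, hb, hc⟩ x => by simp [ha, hb, hc]⟩
  have hc : c = 0 := by simpa using h 0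
  have h₁ := h 1
  have hneg := h (-1)
  have ha : a = 0 := by
    have h2a : (2 : K) * a = 0 := by linear_combination h₁ + hneg - 2 * hc
    exact (mul_eq_zero.1 h2a).resolve_left two_ne_zero
  exact ⟨ha, by linear_combination h₁ - ha - hc, hc⟩

theorem coupling_identity_iff (lam₁ lam₂ F₂ : ℝ) :
    (∀ x : ℝ, lam₁ * ((1 - lam₂ * F₂ ^ 2) * x + (lam₂ + 1) * F₂) =
      x * (-((lam₂ + 1) * F₂) * x + lam₂ - F₂ ^ 2)) ↔
    (lam₂ + 1) * F₂ = 0 ∧ lam₁ * (1 - lam₂ * F₂ ^ 2) = lam₂ - F₂ ^ 2 := by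
  have hpoly : ∀ x : ℝ, lam₁ * ((1 - lam₂ * F₂ ^ 2) * x + (lam₂ + 1) * F₂) =
      x * (-((lam₂ + 1) * F₂) * x + lam₂ - F₂ ^ 2) ↔
      (lam₂ + 1) * F₂ * x ^ 2 + (lam₁ * (1 - lam₂ * F₂ ^ 2) - (lam₂ - F₂ ^ 2)) * x +
        lam₁ * ((lam₂ + 1) * F₂) = 0 :=
    fun x => ⟨fun h => by linear_combination h, fun h => by linear_combination h⟩
  rw [forall_congr' hpoly, quadratic_eq_zero_forall_iff, sub_eq_zero]
  exact ⟨fun ⟨ha, hb, _⟩ => ⟨ha, hb⟩, fun ⟨ha, hb⟩ => ⟨ha, hb, by rw [ha, mul_zero]⟩⟩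

theorem stmt_3_general (lam₁ lam₂ F₂ : ℝ) :
    (∀ x : ℝ, lam₁ * ((1 - lam₂ * F₂ ^ 2) * x + (lam₂ + 1) * F₂) =
      x * (-((lam₂ + 1) * F₂) * x + lam₂ - F₂ ^ 2)) ↔
    ((F₂ = 0 ∧ lam₁ = lam₂) ∨ (F₂ ≠ 0 ∧ lam₁ = -1 ∧ lam₂ = -1)) := by
  rw [coupling_identity_iff]
  constructor
  · rintro ⟨hlead, hlin⟩
    by_cases hF : F₂ = 0
    · subst hF
      exact Or.inl ⟨rfl, by simpa using hlin⟩
    · have hlam₂ : lam₂ = -1 := by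
        linear_combination (mul_eq_zero.1 hlead).resolve_right hF
      subst hlam₂
      have hlam₁ : lam₁ * (1 + F₂ ^ 2) = -1 * (1 + F₂ ^ 2) := by linear_combination hlin
      exact Or.inr ⟨hF, mul_right_cancel₀ (by positivity) hlam₁, rfl⟩
  · rintro (⟨rfl, rfl⟩ | ⟨-, rfl, rfl⟩) <;> constructor <;> ring

/-- Involutive coupling criterion: the cross-multiplied identity equating the two
involutions holds for every `x` iff `F₂ = 0 ∧ λ₁ = λ₂` or `F₂ ≠ 0 ∧ λ₁ = λ₂ = −1`. -/
theorem stmt_3 (lam₁ lam₂ F₂ : ℝ) (hlam₁ : lam₁ ≠ 0) (hlam₂ : lam₂ ≠ 0) :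
    (∀ x : ℝ, lam₁ * ((1 - lam₂ * F₂ ^ 2) * x + (lam₂ + 1) * F₂) =
      x * (-((lam₂ + 1) * F₂) * x + lam₂ - F₂ ^ 2)) ↔
    ((F₂ = 0 ∧ lam₁ = lam₂) ∨ (F₂ ≠ 0 ∧ lam₁ = -1 ∧ lam₂ = -1)) :=
  stmt_3_general lam₁ lam₂ F₂
end

section
/- Let μ₁, μ₂, ν₁, ν₂, λ, F₂, F₃ be real numbers such that either F₂ = 0, or F₂ ≠ 0 and λ = −1. Let x₁, x₂, x₃ be nonzero real numbers with 1 − F₂x₂ ≠ 0, x₂ + F₂ ≠ 0, 1 − F₃x₃ ≠ 0 and x₃ + F₃ ≠ 0, and set y₂ = (x₂ + F₂)/(1 − F₂x₂) and y₃ = (x₃ + F₃)/(1 − F₃x₃). Assume (x₂ + λ/x₂)·(x₁ + μ₁/x₁) = ν₁ and (y₂ + λ/y₂)·(y₃ + μ₂/y₃) = ν₂, and assume (1 − F₂²)·x₁² − F₂ν₁·x₁ + μ₁·(1 − F₂²) ≠ 0. Then ((4F₂·x₁² + ν₁(1 − F₂²)·x₁ + 4F₂μ₁)/((1 − F₂²)·x₁²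 − F₂ν₁·x₁ + μ₁(1 − F₂²)))·(y₃ + μ₂/y₃) = ν₂. -/
/-!
Write `s = x₂ + λ/x₂` and `t = x₁ + μ₁/x₁`, so the first equation reads `s t = ν₁`. Both the
left-hand factor of the claim and `y₂ + λ/y₂` turn out to equal the same Möbius image of `s`,
namely `((1 - F₂²) s + 4 F₂) / ((1 - F₂²) - F₂ s)`: for the first this is `s = ν₁ / t` cleared
of denominators, for the second it is trivial when `F₂ = 0` and a direct computation when
`λ = -1`. The claim is then the second equation.
-/

/-- If `x = tan θ` and `F = tan φ`, then `(x + F) / (1 - F x) = tan (θ + φ)` and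
`x - 1/x = -2 cot 2θ`; `doubledMobius F` is the map induced on `-2 cot 2θ` by `θ ↦ θ + φ`. -/
noncomputable def doubledMobius (F s : ℝ) : ℝ :=
  ((1 - F ^ 2) * s + 4 * F) / ((1 - F ^ 2) - F * s)

@[simp]
lemma doubledMobius_zero (s : ℝ) : doubledMobius 0 s = s := by
  simp [doubledMobius]

lemma mobius_sub_one_div_eq_doubledMobius {F x : ℝ} (hx : x ≠ 0) :
    (x + F) / (1 - F * x) - 1 / ((x + F) / (1 - F * x)) = doubledMobius F (x - 1 / x) := by
  have hden : (1 - F ^ 2) - F * (x - 1 / x) = (x + F) * (1 - F * x) / x := by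
    field_simp
    ring
  rw [doubledMobius, hden]
  field_simp
  ring

lemma quotient_factor_eq_doubledMobius {F μ ν x s : ℝ} (hx : x ≠ 0)
    (hν : s * (x + μ / x) = ν)
    (hden : (1 - F ^ 2) * x ^ 2 - F * ν * x + μ * (1 - F ^ 2) ≠ 0) :
    (4 * F * x ^ 2 + ν * (1 - F ^ 2) * x + 4 * F * μ) /
        ((1 - F ^ 2) * x ^ 2 - F * ν * x + μ * (1 - F ^ 2)) = doubledMobius F s := by
  subst hν
  have hnum_factor : 4 * F * x ^ 2 + s * (x + μ / x) * (1 - F ^ 2) * x + 4 * F * μ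
      = (x ^ 2 + μ) * ((1 - F ^ 2) * s + 4 * F) := by
    field_simp
    ring
  have hden_factor : (1 - F ^ 2) * x ^ 2 - F * (s * (x + μ / x)) * x + μ * (1 - F ^ 2)
      = (x ^ 2 + μ) * ((1 - F ^ 2) - F * s) := by
    field_simp
    ring
  rw [hden_factor] at hden ⊢
  rw [hnum_factor, doubledMobius, mul_div_mul_left _ _ (left_ne_zero_of_mul hden)]

theorem stmt_4_general (μ₁ μ₂ ν₁ ν₂ lam F₂ : ℝ)
    (hinv : F₂ = 0 ∨ (F₂ ≠ 0 ∧ lam = -1))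
    (x₁ x₂ : ℝ) (hx₁ : x₁ ≠ 0) (hx₂ : x₂ ≠ 0)
    (y₂ y₃ : ℝ)
    (hy₂ : y₂ = (x₂ + F₂) / (1 - F₂ * x₂))
    (heq₁ : (x₂ + lam / x₂) * (x₁ + μ₁ / x₁) = ν₁)
    (heq₂ : (y₂ + lam / y₂) * (y₃ + μ₂ / y₃) = ν₂)
    (hden : (1 - F₂ ^ 2) * x₁ ^ 2 - F₂ * ν₁ * x₁ + μ₁ * (1 - F₂ ^ 2) ≠ 0) :
    ((4 * F₂ * x₁ ^ 2 + ν₁ * (1 - F₂ ^ 2) * x₁ + 4 * F₂ * μ₁) /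
        ((1 - F₂ ^ 2) * x₁ ^ 2 - F₂ * ν₁ * x₁ + μ₁ * (1 - F₂ ^ 2))) *
      (y₃ + μ₂ / y₃) = ν₂ := by
  rw [quotient_factor_eq_doubledMobius hx₁ heq₁ hden, ← heq₂, hy₂]
  congr 1
  rcases hinv with rfl | ⟨-, rfl⟩
  · simp
  · rw [neg_div, ← sub_eq_add_neg, neg_div, ← sub_eq_add_neg,
      mobius_sub_one_div_eq_doubledMobius hx₂]

/-- Quotient-space equation of an involutive coupling of two elliptic orthodiagonal
spherical quadrilaterals (elliptic–elliptic case). -/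
theorem stmt_4 (μ₁ μ₂ ν₁ ν₂ lam F₂ F₃ : ℝ)
    (hinv : F₂ = 0 ∨ (F₂ ≠ 0 ∧ lam = -1))
    (x₁ x₂ x₃ : ℝ) (hx₁ : x₁ ≠ 0) (hx₂ : x₂ ≠ 0) (hx₃ : x₃ ≠ 0)
    (h2 : 1 - F₂ * x₂ ≠ 0) (h2' : x₂ + F₂ ≠ 0)
    (h3 : 1 - F₃ * x₃ ≠ 0) (h3' : x₃ + F₃ ≠ 0)
    (y₂ y₃ : ℝ)
    (hy₂ : y₂ = (x₂ + F₂) / (1 - F₂ * x₂))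
    (hy₃ : y₃ = (x₃ + F₃) / (1 - F₃ * x₃))
    (heq₁ : (x₂ + lam / x₂) * (x₁ + μ₁ / x₁) = ν₁)
    (heq₂ : (y₂ + lam / y₂) * (y₃ + μ₂ / y₃) = ν₂)
    (hden : (1 - F₂ ^ 2) * x₁ ^ 2 - F₂ * ν₁ * x₁ + μ₁ * (1 - F₂ ^ 2) ≠ 0) :
    ((4 * F₂ * x₁ ^ 2 + ν₁ * (1 - F₂ ^ 2) * x₁ + 4 * F₂ * μ₁) /
        ((1 - F₂ ^ 2) * x₁ ^ 2 - F₂ * ν₁ * x₁ + μ₁ * (1 - F₂ ^ 2))) *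
      (y₃ + μ₂ / y₃) = ν₂ :=
  stmt_4_general μ₁ μ₂ ν₁ ν₂ lam F₂ hinv x₁ x₂ hx₁ hx₂ y₂ y₃ hy₂ heq₁ heq₂ hden
end

section
/- Let α, β, γ, δ ∈ (0, π) satisfy cos α · cos γ = cos β · cos δ, and suppose there exist signs ε₁, ε₂, ε₃ ∈ {−1, 1} and an integer k such that α + ε₁β + ε₂γ + ε₃δ = 2πk. Then at least one of the following holds: (α = β and γ = δ), or (β = γ and δ = α), or (α + β = π and γ + δ = π), or (β + γ = π and δ + α = π). -/
/-!
Since `cos α cos γ = cos β cos δ`, the pairs `cos (α + γ) < cos (α - γ)` and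
`cos (β + δ) < cos (β - δ)` have the same sum. A relation `α ± β ± γ ± δ ∈ 2πℤ` makes
one member of the first pair equal to one member of the second; equal sums and the strict
ordering then force `cos (α + γ) = cos (β + δ)` and `cos (α - γ) = cos (β - δ)`.
Inverting the cosine on `[0, 2π]` and on `[-π, π]` gives `α + γ = β + δ` or
`α + γ + β + δ = 2π`, and `α - γ = ±(β - δ)`; the four combinations are the four cases
of the conclusion.
-/

open Real

lemma eq_or_eq_neg_of_cos_eq {x y : ℝ} (hx : |x| ≤ π) (hy : |y| ≤ π)
    (h : cos x = cos y) : x = y ∨ x = -y := by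
  have habs : |x| = |y| := by
    refine injOn_cos ⟨abs_nonneg x, hx⟩ ⟨abs_nonneg y, hy⟩ ?_
    rwa [cos_abs, cos_abs]
  exact abs_eq_abs.mp habs

lemma eq_or_add_eq_two_pi_of_cos_eq {x y : ℝ} (hx : x ∈ Set.Icc 0 (2 * π))
    (hy : y ∈ Set.Icc 0 (2 * π)) (h : cos x = cos y) : x = y ∨ x + y = 2 * π := by
  have hshift : cos (x - π) = cos (y - π) := by rw [cos_sub_pi, cos_sub_pi, h]
  rcases eq_or_eq_neg_of_cos_eq (abs_le.mpr ⟨by linarith [hx.1], by linarith [hx.2]⟩)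
    (abs_le.mpr ⟨by linarith [hy.1], by linarith [hy.2]⟩) hshift with h' | h'
  · left; linarith
  · right; linarith

lemma cos_add_add_cos_sub (x y : ℝ) : cos (x + y) + cos (x - y) = 2 * cos x * cos y := by
  rw [cos_add, cos_sub]; ring

lemma cos_add_lt_cos_sub {x y : ℝ} (hx : x ∈ Set.Ioo 0 π) (hy : y ∈ Set.Ioo 0 π) :
    cos (x + y) < cos (x - y) := by
  have hsin : 0 < sin x * sin y :=
    mul_pos (sin_pos_of_pos_of_lt_pi hx.1 hx.2) (sin_pos_of_pos_of_lt_pi hy.1 hy.2)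
  rw [cos_add, cos_sub]
  linarith

lemma cos_sign_mul {s : ℝ} (hs : s = 1 ∨ s = -1) (x : ℝ) : cos (s * x) = cos x := by
  rcases hs with rfl | rfl <;> simp

lemma cos_add_sign_mul_mem {s : ℝ} (hs : s = 1 ∨ s = -1) (x y : ℝ) :
    cos (x + s * y) ∈ ({cos (x + y), cos (x - y)} : Set ℝ) := by
  rcases hs with rfl | rfl <;> simp [← sub_eq_add_neg]

lemma cos_add_sign_mul_eq_of_add_eq_two_pi_mul {α β γ δ ε₁ ε₂ ε₃ : ℝ} {k : ℤ}
    (h₁ : ε₁ = 1 ∨ ε₁ = -1) (h : α + ε₁ * β + ε₂ * γ + ε₃ * δ = 2 * π * k) :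
    cos (α + ε₂ * γ) = cos (β + ε₁ * ε₃ * δ) := by
  have hsq : ε₁ * ε₁ = 1 := by rcases h₁ with rfl | rfl <;> norm_num
  calc cos (α + ε₂ * γ) = cos (k * (2 * π) - ε₁ * (β + ε₁ * ε₃ * δ)) := by
        congr 1
        linear_combination h + ε₃ * δ * hsq
    _ = cos (β + ε₁ * ε₃ * δ) := by rw [cos_int_mul_two_pi_sub, cos_sign_mul h₁]

lemma eq_and_eq_of_add_eq_add_of_mem {a b c d z : ℝ} (hab : a < b) (hcd : c < d)
    (h : a + b = c + d) (hz : z ∈ ({a, b} : Set ℝ)) (hz' : z ∈ ({c, d} : Set ℝ)) :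
    a = c ∧ b = d := by
  simp only [Set.mem_insert_iff, Set.mem_singleton_iff] at hz hz'
  constructor <;> rcases hz with rfl | rfl <;> rcases hz' with h' | h' <;> linarith

/-- Classification: a non-elliptic orthodiagonal spherical quadrilateral is a deltoid
or an antideltoid. -/
theorem stmt_5 (α β γ δ : ℝ)
    (hα : α ∈ Set.Ioo 0 π) (hβ : β ∈ Set.Ioo 0 π) (hγ : γ ∈ Set.Ioo 0 π)
    (hδ : δ ∈ Set.Ioo 0 π)
    (orth : cos α * cos γ = cos β * cos δ)
    (hnonell : ∃ ε₁ ε₂ ε₃ : ℝ, (ε₁ = 1 ∨ ε₁ = -1) ∧ (ε₂ = 1 ∨ ε₂ = -1) ∧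
      (ε₃ = 1 ∨ ε₃ = -1) ∧ ∃ k : ℤ, α + ε₁ * β + ε₂ * γ + ε₃ * δ = 2 * π * k) :
    (α = β ∧ γ = δ) ∨ (β = γ ∧ δ = α) ∨
    (α + β = π ∧ γ + δ = π) ∨ (β + γ = π ∧ δ + α = π) := by
  obtain ⟨ε₁, ε₂, ε₃, h₁, h₂, h₃, k, hk⟩ := hnonell
  have h₁₃ : ε₁ * ε₃ = 1 ∨ ε₁ * ε₃ = -1 := by
    rcases h₁ with rfl | rfl <;> rcases h₃ with rfl | rfl <;> norm_num
  have hsums : cos (α + γ) + cos (α - γ) = cos (β + δ) + cos (β - δ) := by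
    rw [cos_add_add_cos_sub, cos_add_add_cos_sub, mul_assoc, mul_assoc, orth]
  obtain ⟨hplus, hminus⟩ := eq_and_eq_of_add_eq_add_of_mem (cos_add_lt_cos_sub hα hγ)
    (cos_add_lt_cos_sub hβ hδ) hsums (cos_add_sign_mul_mem h₂ α γ)
    (cos_add_sign_mul_eq_of_add_eq_two_pi_mul h₁ hk ▸ cos_add_sign_mul_mem h₁₃ β δ)
  obtain ⟨hα₀, hα₁⟩ := hα
  obtain ⟨hβ₀, hβ₁⟩ := hβ
  obtain ⟨hγ₀, hγ₁⟩ := hγ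
  obtain ⟨hδ₀, hδ₁⟩ := hδ
  rcases eq_or_add_eq_two_pi_of_cos_eq ⟨by linarith, by linarith⟩ ⟨by linarith, by linarith⟩
      hplus with hp | hp <;>
    rcases eq_or_eq_neg_of_cos_eq (abs_le.mpr ⟨by linarith, by linarith⟩)
      (abs_le.mpr ⟨by linarith, by linarith⟩) hminus with hm | hm
  · exact Or.inl ⟨by linarith, by linarith⟩
  · exact Or.inr (Or.inl ⟨by linarith, by linarith⟩)
  · exact Or.inr (Or.inr (Or.inr ⟨by linarith, by linarith⟩))
  · exact Or.inr (Or.inr (Or.inl ⟨by linarith, by linarith⟩))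
end

section
/- Let u₁, u₂, u₃, u₄ be unit vectors in three-dimensional Euclidean space with u₁ and u₃ linearly independent and u₂ and u₄ linearly independent, and let α, β, γ, δ ∈ (0, π) satisfy cos α = ⟨u₁, u₂⟩, cos β = ⟨u₂, u₃⟩, cos γ = ⟨u₃, u₄⟩, cos δ = ⟨u₄, u₁⟩. Then ⟨u₁ × u₃, u₂ × u₄⟩ = 0 if and only if cos α · cos γ = cos β · cos δ. -/
open Real Matrix

/-- Orthodiagonality criterion: the diagonals of a spherical quadrilateral with
vertices `u₁ u₂ u₃ u₄` and side lengths `α β γ δ` are orthogonal iff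
`cos α · cos γ = cos β · cos δ`. -/
theorem stmt_6 (u₁ u₂ u₃ u₄ : Fin 3 → ℝ)
    (h₁ : u₁ ⬝ᵥ u₁ = 1) (h₂ : u₂ ⬝ᵥ u₂ = 1) (h₃ : u₃ ⬝ᵥ u₃ = 1) (h₄ : u₄ ⬝ᵥ u₄ = 1)
    (hli13 : LinearIndependent ℝ ![u₁, u₃]) (hli24 : LinearIndependent ℝ ![u₂, u₄])
    (α β γ δ : ℝ)
    (hα : α ∈ Set.Ioo 0 π) (hβ : β ∈ Set.Ioo 0 π) (hγ : γ ∈ Set.Ioo 0 π)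
    (hδ : δ ∈ Set.Ioo 0 π)
    (ha : cos α = u₁ ⬝ᵥ u₂) (hb : cos β = u₂ ⬝ᵥ u₃)
    (hc : cos γ = u₃ ⬝ᵥ u₄) (hd : cos δ = u₄ ⬝ᵥ u₁) :
    (u₁ ⨯₃ u₃) ⬝ᵥ (u₂ ⨯₃ u₄) = 0 ↔ cos α * cos γ = cos β * cos δ := by
  have key : (u₁ ⨯₃ u₃) ⬝ᵥ (u₂ ⨯₃ u₄) = cos α * cos γ - cos β * cos δ := by
    rw [ha, hb, hc, hd]
    simp only [crossProduct, dotProduct, Fin.sum_univ_three]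
    simp [Matrix.cons_val_zero, Matrix.cons_val_one]
    ring
  rw [key]
  constructor <;> intro h <;> linarith
end

section
/- Let α, β, γ, δ ∈ (0, π) satisfy cos α · cos γ = cos β · cos δ. Then there exist unit vectors u₁, u₂, u₃, u₄ in three-dimensional Euclidean space such that ⟨u₁, u₂⟩ = cos α, ⟨u₂, u₃⟩ = cos β, ⟨u₃, u₄⟩ = cos γ, ⟨u₄, u₁⟩ = cos δ, and ⟨u₁ × u₃, u₂ × u₄⟩ = 0. -/
open Real Matrix

private lemma aux_prs (x y z w : ℝ) (hx : |x| ≤ 1) (hy : |y| ≤ 1) (hz : |z| ≤ 1)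
    (hw : |w| ≤ 1) (h : x * z = y * w) :
    ∃ P Q R S : ℝ, |P| ≤ 1 ∧ |Q| ≤ 1 ∧ |R| ≤ 1 ∧ |S| ≤ 1 ∧
      P * R = x ∧ Q * R = y ∧ Q * S = z ∧ P * S = w := by
  rcases eq_or_ne y 0 with hy0 | hy0
  · rcases eq_or_ne x 0 with hx0 | hx0
    · exact ⟨w, z, 0, 1, hw, hz, by simp, by simp, by simp [hx0], by simp [hy0],
        by simp, by simp⟩
    · have hz0 : z = 0 := by
        have := h; rw [hy0] at this; simp at this
        rcases this with h1 | h1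
        · exact absurd h1 hx0
        · exact h1
      exact ⟨1, 0, x, w, by simp, by simp, hx, hw, by ring, by simp [hy0],
        by simp [hz0], by ring⟩
  · rcases eq_or_ne x 0 with hx0 | hx0
    · have hw0 : w = 0 := by
        have h2 : y * w = 0 := by rw [← h, hx0]; ring
        rcases mul_eq_zero.mp h2 with h1 | h1
        · exact absurd h1 hy0
        · exact h1
      exact ⟨0, 1, y, z, by simp, by simp, hy, hz, by simp [hx0], by ring,
        by ring, by simp [hw0]⟩
    · set t := max |x| |y| with ht
      have htpos : 0 < t := lt_max_of_lt_right (abs_pos.mpr hy0)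
      have ht1 : t ≤ 1 := max_le hx hy
      refine ⟨x / t, y / t, t, t * z / y, ?_, ?_, ?_, ?_, ?_, ?_, ?_, ?_⟩
      · rw [abs_div, abs_of_pos htpos, div_le_one htpos]; exact le_max_left _ _
      · rw [abs_div, abs_of_pos htpos, div_le_one htpos]; exact le_max_right _ _
      · rw [abs_of_pos htpos]; exact ht1
      · rw [abs_div, abs_mul, abs_of_pos htpos, div_le_one (abs_pos.mpr hy0)]
        rcases max_cases |x| |y| with ⟨h1, _⟩ | ⟨h1, _⟩
        · rw [ht, h1, ← abs_mul, h, abs_mul]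
          calc |y| * |w| ≤ |y| * 1 := by
                exact mul_le_mul_of_nonneg_left hw (abs_nonneg _)
            _ = |y| := by ring
        · rw [ht, h1]
          calc |y| * |z| ≤ |y| * 1 := mul_le_mul_of_nonneg_left hz (abs_nonneg _)
            _ = |y| := by ring
      · field_simp
      · field_simp
      · field_simp
      · field_simp
        linear_combination h

set_option maxHeartbeats 1000000 in
private lemma aux_vec (x y z w : ℝ) (hx : |x| ≤ 1) (hy : |y| ≤ 1) (hz : |z| ≤ 1)
    (hw : |w| ≤ 1) (h : x * z = y * w) :
    ∃ u₁ u₂ u₃ u₄ : Fin 3 → ℝ,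
      u₁ ⬝ᵥ u₁ = 1 ∧ u₂ ⬝ᵥ u₂ = 1 ∧ u₃ ⬝ᵥ u₃ = 1 ∧ u₄ ⬝ᵥ u₄ = 1 ∧
      u₁ ⬝ᵥ u₂ = x ∧ u₂ ⬝ᵥ u₃ = y ∧ u₃ ⬝ᵥ u₄ = z ∧ u₄ ⬝ᵥ u₁ = w ∧
      (u₁ ⨯₃ u₃) ⬝ᵥ (u₂ ⨯₃ u₄) = 0 := by
  obtain ⟨P, Q, R, S, hP, hQ, hR, hS, e1, e2, e3, e4⟩ :=
    aux_prs x y z w hx hy hz hw h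
  have hP2 : Real.sqrt (1 - P ^ 2) ^ 2 = 1 - P ^ 2 :=
    Real.sq_sqrt (by nlinarith [abs_le.mp hP])
  have hQ2 : Real.sqrt (1 - Q ^ 2) ^ 2 = 1 - Q ^ 2 :=
    Real.sq_sqrt (by nlinarith [abs_le.mp hQ])
  have hR2 : Real.sqrt (1 - R ^ 2) ^ 2 = 1 - R ^ 2 :=
    Real.sq_sqrt (by nlinarith [abs_le.mp hR])
  have hS2 : Real.sqrt (1 - S ^ 2) ^ 2 = 1 - S ^ 2 :=
    Real.sq_sqrt (by nlinarith [abs_le.mp hS])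
  refine ⟨![P, Real.sqrt (1 - P ^ 2), 0], ![R, 0, Real.sqrt (1 - R ^ 2)],
    ![Q, -Real.sqrt (1 - Q ^ 2), 0], ![S, 0, -Real.sqrt (1 - S ^ 2)],
    ?_, ?_, ?_, ?_, ?_, ?_, ?_, ?_, ?_⟩ <;>
      simp only [dotProduct, crossProduct, Fin.sum_univ_three, Matrix.cons_val_zero,
        Matrix.cons_val_one, Matrix.head_cons, Matrix.cons_val_two, Matrix.tail_cons,
        Matrix.cons_val', Matrix.empty_val', Matrix.cons_val_fin_one, LinearMap.mk₂_apply,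
        Matrix.cons_dotProduct, Matrix.dotProduct_of_isEmpty] <;>
      nlinarith [hP2, hQ2, hR2, hS2, e1, e2, e3, e4]

/-- Existence of a spherical orthodiagonal quadrilateral with prescribed side
lengths satisfying `cos α · cos γ = cos β · cos δ`. -/
theorem stmt_7 (α β γ δ : ℝ)
    (hα : α ∈ Set.Ioo 0 π) (hβ : β ∈ Set.Ioo 0 π) (hγ : γ ∈ Set.Ioo 0 π)
    (hδ : δ ∈ Set.Ioo 0 π)
    (orth : cos α * cos γ = cos β * cos δ) :
    ∃ u₁ u₂ u₃ u₄ : Fin 3 → ℝ,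
      u₁ ⬝ᵥ u₁ = 1 ∧ u₂ ⬝ᵥ u₂ = 1 ∧ u₃ ⬝ᵥ u₃ = 1 ∧ u₄ ⬝ᵥ u₄ = 1 ∧
      u₁ ⬝ᵥ u₂ = cos α ∧ u₂ ⬝ᵥ u₃ = cos β ∧ u₃ ⬝ᵥ u₄ = cos γ ∧ u₄ ⬝ᵥ u₁ = cos δ ∧
      (u₁ ⨯₃ u₃) ⬝ᵥ (u₂ ⨯₃ u₄) = 0 := by
  exact aux_vec _ _ _ _ (abs_cos_le_one α) (abs_cos_le_one β) (abs_cos_le_one γ)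
    (abs_cos_le_one δ) orth
end

section
/- Let α, β, γ, δ ∈ (0, π) satisfy cos α · cos γ = cos β · cos δ, suppose that α + ε₁β + ε₂γ + ε₃δ is not an integer multiple of 2π for any signs ε₁, ε₂, ε₃ ∈ {−1, 1}, and assume α ≠ π/2, γ ≠ π/2, δ ≠ π/2. Then tan δ ≠ tan α, tan δ ≠ tan γ, tan δ ≠ −tan α and tan δ ≠ −tan γ; consequently the involution factors λ = (tan δ + tan α)/(tan δ − tan α) and μ = (tan δ + tan γ)/(tan δ − tan γ) are well-defined nonzero real numbers. -/
/-!
On `(0, π)` the cosine is injective and so is the tangent away from `π / 2`. Hence `tan δ = ± tan α`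
forces `δ = α` or `δ = π - α`, so `cos δ = ± cos α`, and orthodiagonality turns this into
`cos γ = ± cos β`, i.e. `γ = β` or `γ = π - β`. Then `α - β + γ - δ = 0` or `α + β + γ + δ = 2π`,
which ellipticity excludes. The same argument with `α` and `γ` exchanged handles `tan γ`.
-/

open Real Set

lemma cos_ne_zero_of_mem_Ioo {x : ℝ} (hx : x ∈ Ioo 0 π) (hx2 : x ≠ π / 2) : cos x ≠ 0 := fun h =>
  hx2 <| injOn_cos (Ioo_subset_Icc_self hx) ⟨by linarith [pi_pos], by linarith [pi_pos]⟩
    (h.trans cos_pi_div_two.symm)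

lemma eq_of_tan_eq_of_mem_Ioo {x y : ℝ} (hx : x ∈ Ioo 0 π) (hy : y ∈ Ioo 0 π) (hcy : cos y ≠ 0)
    (h : tan x = tan y) : x = y := by
  rw [tan_eq_sin_div_cos, tan_eq_sin_div_cos] at h
  -- Mathlib's `tan` vanishes where `cos` does, whereas `tan y ≠ 0`.
  have hcx : cos x ≠ 0 := by
    intro hcx
    rw [hcx, div_zero, eq_comm, div_eq_zero_iff] at h
    exact (sin_pos_of_mem_Ioo hy).ne' (h.resolve_right hcy)
  have hsin : sin (x - y) = 0 := by
    rw [sin_sub]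
    rw [div_eq_div_iff hcx hcy] at h
    linarith
  have := (sin_eq_zero_iff_of_lt_of_lt (by linarith [hx.1, hy.2]) (by linarith [hx.2, hy.1])).1 hsin
  linarith

lemma tan_ne_tan_and_neg_tan_of_orthodiagonal {α β γ δ : ℝ} (hα : α ∈ Ioo 0 π) (hβ : β ∈ Ioo 0 π)
    (hγ : γ ∈ Ioo 0 π) (hδ : δ ∈ Ioo 0 π) (hcα : cos α ≠ 0)
    (orth : cos α * cos γ = cos β * cos δ)
    (h0 : α - β + γ - δ ≠ 0) (h2π : α + β + γ + δ ≠ 2 * π) :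
    tan δ ≠ tan α ∧ tan δ ≠ -tan α := by
  have hβ' : π - β ∈ Ioo 0 π := ⟨by linarith [hβ.2], by linarith [hβ.1]⟩
  constructor
  · intro h
    have hδα : δ = α := eq_of_tan_eq_of_mem_Ioo hδ hα hcα h
    have hcos : cos γ = cos β := by
      subst hδα
      exact mul_left_cancel₀ hcα (orth.trans (mul_comm _ _))
    have hγβ : γ = β := injOn_cos (Ioo_subset_Icc_self hγ) (Ioo_subset_Icc_self hβ) hcos
    exact h0 (by rw [hδα, hγβ]; ring)
  · intro h
    have hα' : π - α ∈ Ioo 0 π := ⟨by linarith [hα.2], by linarith [hα.1]⟩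
    have hδα : δ = π - α :=
      eq_of_tan_eq_of_mem_Ioo hδ hα' (by rwa [cos_pi_sub, neg_ne_zero]) (by rw [tan_pi_sub, h])
    have hcos : cos γ = cos (π - β) := by
      rw [hδα, cos_pi_sub] at orth
      rw [cos_pi_sub]
      exact mul_left_cancel₀ hcα (by linarith)
    have hγβ : γ = π - β := injOn_cos (Ioo_subset_Icc_self hγ) (Ioo_subset_Icc_self hβ') hcos
    exact h2π (by rw [hδα, hγβ]; ring)

theorem stmt_8_general (α β γ δ : ℝ)
    (hα : α ∈ Set.Ioo 0 π) (hβ : β ∈ Set.Ioo 0 π) (hγ : γ ∈ Set.Ioo 0 π)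
    (hδ : δ ∈ Set.Ioo 0 π)
    (orth : cos α * cos γ = cos β * cos δ)
    (ell : ∀ ε₁ ε₂ ε₃ : ℝ, (ε₁ = 1 ∨ ε₁ = -1) → (ε₂ = 1 ∨ ε₂ = -1) →
      (ε₃ = 1 ∨ ε₃ = -1) → ∀ k : ℤ, α + ε₁ * β + ε₂ * γ + ε₃ * δ ≠ 2 * π * k)
    (hα2 : α ≠ π / 2) (hγ2 : γ ≠ π / 2) :
    tan δ ≠ tan α ∧ tan δ ≠ tan γ ∧ tan δ ≠ -tan α ∧ tan δ ≠ -tan γ ∧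
    (tan δ + tan α) / (tan δ - tan α) ≠ 0 ∧
    (tan δ + tan γ) / (tan δ - tan γ) ≠ 0 := by
  have h0 : α - β + γ - δ ≠ 0 := by
    simpa [← sub_eq_add_neg] using ell (-1) 1 (-1) (.inr rfl) (.inl rfl) (.inr rfl) 0
  have h2π : α + β + γ + δ ≠ 2 * π := by
    simpa using ell 1 1 1 (.inl rfl) (.inl rfl) (.inl rfl) 1
  obtain ⟨hδα, hδα'⟩ := tan_ne_tan_and_neg_tan_of_orthodiagonal hα hβ hγ hδ
    (cos_ne_zero_of_mem_Ioo hα hα2) orth h0 h2π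
  obtain ⟨hδγ, hδγ'⟩ := tan_ne_tan_and_neg_tan_of_orthodiagonal hγ hβ hα hδ
    (cos_ne_zero_of_mem_Ioo hγ hγ2) (by rw [mul_comm, orth]) (by convert h0 using 1; ring)
    (by convert h2π using 2; ring)
  refine ⟨hδα, hδγ, hδα', hδγ', ?_, ?_⟩
  · exact div_ne_zero (fun h => hδα' (eq_neg_of_add_eq_zero_left h)) (sub_ne_zero.2 hδα)
  · exact div_ne_zero (fun h => hδγ' (eq_neg_of_add_eq_zero_left h)) (sub_ne_zero.2 hδγ)

/-- Well-definedness of the involution factors of an elliptic orthodiagonal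
spherical quadrilateral (generic case). -/
theorem stmt_8 (α β γ δ : ℝ)
    (hα : α ∈ Set.Ioo 0 π) (hβ : β ∈ Set.Ioo 0 π) (hγ : γ ∈ Set.Ioo 0 π)
    (hδ : δ ∈ Set.Ioo 0 π)
    (orth : cos α * cos γ = cos β * cos δ)
    (ell : ∀ ε₁ ε₂ ε₃ : ℝ, (ε₁ = 1 ∨ ε₁ = -1) → (ε₂ = 1 ∨ ε₂ = -1) →
      (ε₃ = 1 ∨ ε₃ = -1) → ∀ k : ℤ, α + ε₁ * β + ε₂ * γ + ε₃ * δ ≠ 2 * π * k)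
    (hα2 : α ≠ π / 2) (hγ2 : γ ≠ π / 2) (hδ2 : δ ≠ π / 2) :
    tan δ ≠ tan α ∧ tan δ ≠ tan γ ∧ tan δ ≠ -tan α ∧ tan δ ≠ -tan γ ∧
    (tan δ + tan α) / (tan δ - tan α) ≠ 0 ∧
    (tan δ + tan γ) / (tan δ - tan γ) ≠ 0 :=
  stmt_8_general α β γ δ hα hβ hγ hδ orth ell hα2 hγ2
end

section
/- Let ν₁, ν₂, ν₃, ν₄, t₁, t₂, t₃ be real numbers with 4t₂ + ν₂t₃ ≠ 0. Define p₁₂(t₄) = 16ν₄t₁t₂t₃ + 4ν₃ν₄t₁t₂t₄ + ν₂ν₃ν₄t₁t₃t₄ + 64t₂t₃t₄ − 4ν₂ν₄t₁ − 16ν₃t₂ − 4ν₂ν₃t₃ − 16ν₂t₄ and p₁₃(t₄) = ν₁ν₂ν₄t₁t₂t₃ + 64t₁t₂t₄ + 16ν₂t₁t₃t₄ + 4ν₁ν₂t₂t₃t₄ − 4ν₁ν₄t₁ − 16ν₄t₂ − 4ν₂ν₄t₃ − 16ν₁t₄. If there exists a real number t₄ with p₁₂(t₄) = 0 and p₁₃(t₄)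 = 0, then ν₄(ν₁ν₂ν₃ν₄ − 256)·t₁²t₂t₃ + 4ν₄(16ν₂ − ν₁ν₃ν₄)·t₁² + 16ν₃(16 − ν₄²)·t₁t₂ + 4ν₂ν₃(16 − ν₄²)·t₁t₃ + 16(ν₁ν₂ν₃ − 16ν₄)·t₂t₃ + 64(ν₂ν₄ − ν₁ν₃) = 0. -/
theorem linear_resultant_eq_zero_of_common_root {R : Type*} [CommRing R] {a b c d x : R}
    (h₁ : a * x + b = 0) (h₂ : c * x + d = 0) : a * d - b * c = 0 := by
  linear_combination a * h₂ - c * h₁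

/-- Elimination step: in the generic case `4t₂ + ν₂t₃ ≠ 0`, a common real root `t₄`
of the minors `p₁₂` and `p₁₃` forces the vanishing of the resultant-type polynomial. -/
theorem stmt_15 (ν₁ ν₂ ν₃ ν₄ t₁ t₂ t₃ : ℝ) (hgen : 4 * t₂ + ν₂ * t₃ ≠ 0)
    (p₁₂ p₁₃ : ℝ → ℝ)
    (hp₁₂ : ∀ t₄, p₁₂ t₄ = 16 * ν₄ * t₁ * t₂ * t₃ + 4 * ν₃ * ν₄ * t₁ * t₂ * t₄ +
      ν₂ * ν₃ * ν₄ * t₁ * t₃ * t₄ + 64 * t₂ * t₃ * t₄ - 4 * ν₂ * ν₄ * t₁ -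
      16 * ν₃ * t₂ - 4 * ν₂ * ν₃ * t₃ - 16 * ν₂ * t₄)
    (hp₁₃ : ∀ t₄, p₁₃ t₄ = ν₁ * ν₂ * ν₄ * t₁ * t₂ * t₃ + 64 * t₁ * t₂ * t₄ +
      16 * ν₂ * t₁ * t₃ * t₄ + 4 * ν₁ * ν₂ * t₂ * t₃ * t₄ - 4 * ν₁ * ν₄ * t₁ -
      16 * ν₄ * t₂ - 4 * ν₂ * ν₄ * t₃ - 16 * ν₁ * t₄)
    (hroot : ∃ t₄ : ℝ, p₁₂ t₄ = 0 ∧ p₁₃ t₄ = 0) :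
    ν₄ * (ν₁ * ν₂ * ν₃ * ν₄ - 256) * t₁ ^ 2 * t₂ * t₃ +
      4 * ν₄ * (16 * ν₂ - ν₁ * ν₃ * ν₄) * t₁ ^ 2 +
      16 * ν₃ * (16 - ν₄ ^ 2) * t₁ * t₂ +
      4 * ν₂ * ν₃ * (16 - ν₄ ^ 2) * t₁ * t₃ +
      16 * (ν₁ * ν₂ * ν₃ - 16 * ν₄) * t₂ * t₃ +
      64 * (ν₂ * ν₄ - ν₁ * ν₃) = 0 := by
  obtain ⟨t₄, h₁₂, h₁₃⟩ := hroot
  have hres := linear_resultant_eq_zero_of_common_root (x := t₄)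
    (a := 4 * ν₃ * ν₄ * t₁ * t₂ + ν₂ * ν₃ * ν₄ * t₁ * t₃ + 64 * t₂ * t₃ - 16 * ν₂)
    (b := 16 * ν₄ * t₁ * t₂ * t₃ - 4 * ν₂ * ν₄ * t₁ - 16 * ν₃ * t₂ - 4 * ν₂ * ν₃ * t₃)
    (c := 64 * t₁ * t₂ + 16 * ν₂ * t₁ * t₃ + 4 * ν₁ * ν₂ * t₂ * t₃ - 16 * ν₁)
    (d := ν₁ * ν₂ * ν₄ * t₁ * t₂ * t₃ - 4 * ν₁ * ν₄ * t₁ - 16 * ν₄ * t₂ - 4 * ν₂ * ν₄ * t₃)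
    (by rw [← h₁₂, hp₁₂]; ring) (by rw [← h₁₃, hp₁₃]; ring)
  -- The resultant factors as `(4 t₂ + ν₂ t₃)` times the target polynomial.
  refine (mul_eq_zero.mp ?_).resolve_left hgen
  linear_combination hres
end

section
/- Let ν₁, ν₂, ν₃, ν₄, t₁, t₃ be real numbers with ν₂ ≠ 0 and ν₃ ≠ 0, and set t₂ = −(ν₂/4)·t₃ and t₄ = −(ν₄/4)·t₁. Let N be the 2×4 real matrix with first row (2(4t₂ + ν₂t₃), 4(4t₂t₃ − ν₂), ν₁(4 − ν₂t₂t₃), 2ν₁(ν₂t₂ + 4t₃)) and second row (2(ν₄t₁ + 4t₄), ν₃(4 − ν₄t₁t₄), 4(4t₁t₄ − ν₄), 2ν₃(4t₁ + ν₄t₄)). Then every 2×2 minor of N vanishes if and only if both P₂₃ = ν₂ν₄(ν₁ν₂ν₃ν₄ − 256)·t₁²t₃² + 16ν₄(ν₁ν₃ν₄ − 16ν₂)·t₁² + 16ν₂(ν₁ν₂ν₃ − 16ν₄)·t₃² + 256(ν₁ν₃ − ν₂ν₄) = 0 and P₂₄ = ν₁ν₄²(ν₂² − 16)·t₁²t₃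 + 16ν₂(ν₄² − 16)·t₁t₃² + 16ν₂(ν₄² − 16)·t₁ + 16ν₁(ν₂² − 16)·t₃ = 0. -/
/-!
Under the substitution the first column of `N` vanishes, and the entry `N 0 1 = -4ν₂(t₃² + 1)` is
nonzero. A `2 × n` matrix whose first row has a nonzero entry `u k` has rank at most one as soon as
the minors through column `k` vanish, so only the minors on columns `(1, 2)` and `(1, 3)` remain.
These are `-P₂₃ / 16` and `ν₃ P₂₄ / 8`.
-/

section RankOne

variable {R : Type*} [CommRing R] [IsDomain R] {ι : Type*}

theorem minors_eq_zero_iff_of_ne_zero (u v : ι → R) {k : ι} (hk : u k ≠ 0) :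
    (∀ i j, u i * v j - u j * v i = 0) ↔ ∀ j, u k * v j - u j * v k = 0 := by
  refine ⟨fun h j => h k j, fun h i j => ?_⟩
  have hkij : u k * (u i * v j - u j * v i) = 0 := by
    linear_combination u i * h j - u j * h i
  exact (mul_eq_zero.mp hkij).resolve_left hk

theorem minors_eq_zero_iff_of_col_zero_eq_zero (u v : Fin 4 → R) (hu : u 0 = 0) (hv : v 0 = 0)
    (h₁ : u 1 ≠ 0) :
    (∀ i j, u i * v j - u j * v i = 0) ↔
      u 1 * v 2 - u 2 * v 1 = 0 ∧ u 1 * v 3 - u 3 * v 1 = 0 := by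
  rw [minors_eq_zero_iff_of_ne_zero u v h₁]
  refine ⟨fun h => ⟨h 2, h 3⟩, fun ⟨h₂, h₃⟩ j => ?_⟩
  fin_cases j
  · simp [hu, hv]
  · exact sub_self _
  · exact h₂
  · exact h₃

end RankOne

/-- Linear-dependence case `t₂ = −ν₂t₃/4`, `t₄ = −ν₄t₁/4`: the rank-one condition on
`N` is equivalent to the two polynomial equations `P₂₃ = 0` and `P₂₄ = 0`. -/
theorem stmt_17 (ν₁ ν₂ ν₃ ν₄ t₁ t₃ : ℝ) (hν₂ : ν₂ ≠ 0) (hν₃ : ν₃ ≠ 0)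
    (t₂ t₄ : ℝ) (ht₂ : t₂ = -(ν₂ / 4) * t₃) (ht₄ : t₄ = -(ν₄ / 4) * t₁)
    (N : Matrix (Fin 2) (Fin 4) ℝ)
    (hN : N = !![2 * (4 * t₂ + ν₂ * t₃), 4 * (4 * t₂ * t₃ - ν₂),
        ν₁ * (4 - ν₂ * t₂ * t₃), 2 * ν₁ * (ν₂ * t₂ + 4 * t₃);
      2 * (ν₄ * t₁ + 4 * t₄), ν₃ * (4 - ν₄ * t₁ * t₄),
        4 * (4 * t₁ * t₄ - ν₄), 2 * ν₃ * (4 * t₁ + ν₄ * t₄)]) :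
    (∀ i j : Fin 4, N 0 i * N 1 j - N 0 j * N 1 i = 0) ↔
    (ν₂ * ν₄ * (ν₁ * ν₂ * ν₃ * ν₄ - 256) * t₁ ^ 2 * t₃ ^ 2 +
        16 * ν₄ * (ν₁ * ν₃ * ν₄ - 16 * ν₂) * t₁ ^ 2 +
        16 * ν₂ * (ν₁ * ν₂ * ν₃ - 16 * ν₄) * t₃ ^ 2 +
        256 * (ν₁ * ν₃ - ν₂ * ν₄) = 0 ∧
      ν₁ * ν₄ ^ 2 * (ν₂ ^ 2 - 16) * t₁ ^ 2 * t₃ +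
        16 * ν₂ * (ν₄ ^ 2 - 16) * t₁ * t₃ ^ 2 +
        16 * ν₂ * (ν₄ ^ 2 - 16) * t₁ +
        16 * ν₁ * (ν₂ ^ 2 - 16) * t₃ = 0) := by
  subst hN ht₂ ht₄
  have hN01 : -4 * ν₂ * (t₃ ^ 2 + 1) ≠ 0 :=
    mul_ne_zero (mul_ne_zero (by norm_num) hν₂) (by positivity)
  rw [minors_eq_zero_iff_of_col_zero_eq_zero _ _ (by simp; ring) (by simp; ring)
    (by convert hN01 using 1; simp; ring)]
  simp only [Matrix.of_apply, Matrix.cons_val', Matrix.cons_val, Matrix.empty_val',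
    Matrix.cons_val_fin_one]
  refine and_congr ⟨fun h => by linear_combination -16 * h, fun h => by linear_combination -h / 16⟩
    ⟨fun h => mul_left_cancel₀ hν₃ (by linear_combination 8 * h), fun h => by
      linear_combination ν₃ / 8 * h⟩
end
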